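/- arXiv:0903.5269 — 2 statements merged into one kernel-verified Lean document; each statement's English description precedes it below -/
import Mathlib

section
/- If R ∈ 𝔯(V) satisfies ψ(R) = 0 and μ(R) = 0 (equivalently, R is ⟨·,·⟩_g-orthogonal to 𝔞(V) ⊕ 𝔰(V)), then Ric(R) is antisymmetric, i.e., Ric(R)(y,z) = −Ric(R)(z,y) for all y, z ∈ V, and Ric*(R) = 3·Ric(R). -/
open scoped BigOperators
open Pointwise

namespace GCT

variable {V : Type*} [AddCommGroup V] [Module ℝ V]

/-- Linearity of a real valued function of one vector variable. -/
def IsLin (f : V → ℝ) : Prop :=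
  (∀ x y : V, f (x + y) = f x + f y) ∧ (∀ (c : ℝ) (x : V), f (c • x) = c * f x)

/-- Bilinearity. -/
def IsBilin (h : V → V → ℝ) : Prop :=
  (∀ y, IsLin (fun x => h x y)) ∧ (∀ x, IsLin (fun y => h x y))

/-- 4-linearity. -/
def IsMulti4 (F : V → V → V → V → ℝ) : Prop :=
  (∀ y z w, IsLin (fun x => F x y z w)) ∧ (∀ x z w, IsLin (fun y => F x y z w)) ∧
    (∀ x y w, IsLin (fun z => F x y z w)) ∧ (∀ x y z, IsLin (fun w => F x y z w))

/-- The space 𝔯(V) of generalized curvature tensors. -/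
def rSet (V : Type*) [AddCommGroup V] [Module ℝ V] : Set (V → V → V → V → ℝ) :=
  {F | IsMulti4 F ∧ (∀ x y z w, F x y z w = - F y x z w) ∧
    (∀ x y z w, F x y z w + F y z x w + F z x y w = 0)}

/-- The space 𝔞(V) of algebraic curvature tensors. -/
def aSet (V : Type*) [AddCommGroup V] [Module ℝ V] : Set (V → V → V → V → ℝ) :=
  {F | F ∈ rSet V ∧ ∀ x y z w, F x y z w = - F x y w z}

/-- The space 𝔰(V). -/
def sSet (V : Type*) [AddCommGroup V] [Module ℝ V] : Set (V → V → V → V → ℝ) :=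
  {F | F ∈ rSet V ∧ ∀ x y z w, F x y z w = F x y w z}

/-- The conjugate tensor R*. -/
def conj (F : V → V → V → V → ℝ) : V → V → V → V → ℝ := fun x y z w => - F x y w z

/-- The product h·k of two bilinear forms. -/
def prodB (h k : V → V → ℝ) : V → V → V → V → ℝ := fun x y z w => h x y * k z w

/-- The wedge product h ∧_t k of two bilinear forms. -/
def wedge (t : ℝ) (h k : V → V → ℝ) : V → V → V → V → ℝ :=
  fun x y z w => h x z * k y w - h y z * k x w - t * (h x w * k y z - h y w * k x z)

/-- Antisymmetric part Λh. -/
noncomputable def lamB (h : V → V → ℝ) : V → V → ℝ := fun x y => (h x y - h y x) / 2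

/-- Symmetric part Sh. -/
noncomputable def symB (h : V → V → ℝ) : V → V → ℝ := fun x y => (h x y + h y x) / 2

/-- The idempotent ψ. -/
noncomputable def psi (F : V → V → V → V → ℝ) : V → V → V → V → ℝ :=
  fun x y z w => (F x y z w + F y x w z + F z w x y + F w z y x) / 4

/-- The idempotent μ. -/
noncomputable def mu (F : V → V → V → V → ℝ) : V → V → V → V → ℝ :=
  fun x y z w =>
    (3 * F x y z w + 3 * F x y w z + F x w z y + F x z w y + F w y z x + F z y w x) / 8

/-- A linear equivalence is a g-isometry. -/
def IsIsometry (g : V → V → ℝ) (φ : V ≃ₗ[ℝ] V) : Prop := ∀ x y, g (φ x) (φ y) = g x y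

/-- Pull back of a 4-tensor along a linear equivalence (the natural action). -/
def pullT (φ : V ≃ₗ[ℝ] V) (F : V → V → V → V → ℝ) : V → V → V → V → ℝ :=
  fun x y z w => F (φ x) (φ y) (φ z) (φ w)

/-- Invariance of a set of 4-tensors under the orthogonal group O(V,g). -/
def OInv (g : V → V → ℝ) (S : Set (V → V → V → V → ℝ)) : Prop :=
  ∀ φ : V ≃ₗ[ℝ] V, IsIsometry g φ → ∀ F ∈ S, pullT φ F ∈ S

/-- Irreducibility of a subspace of 4-tensors as an O(V,g)-module:
there is no proper nonzero invariant subspace. -/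
def OIrred (g : V → V → ℝ) (W : Set (V → V → V → V → ℝ)) : Prop :=
  ∀ U : Submodule ℝ (V → V → V → V → ℝ), (U : Set (V → V → V → V → ℝ)) ⊆ W →
    (∀ φ : V ≃ₗ[ℝ] V, IsIsometry g φ → ∀ F ∈ U, pullT φ F ∈ U) →
    (U : Set (V → V → V → V → ℝ)) = {0} ∨ (U : Set (V → V → V → V → ℝ)) = W

/-- Isomorphism of two invariant subspaces as O(V,g)-modules. -/
def OEquivMod (g : V → V → ℝ) (S T : Set (V → V → V → V → ℝ)) : Prop :=
  ∃ e : (V → V → V → V → ℝ) →ₗ[ℝ] (V → V → V → V → ℝ),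
    Set.BijOn e S T ∧
      ∀ φ : V ≃ₗ[ℝ] V, IsIsometry g φ → ∀ F ∈ S, e (pullT φ F) = pullT φ (e F)

variable (n : ℕ) (b : Module.Basis (Fin n) ℝ V) (g : V → V → ℝ)

/-- Inverse metric components g^{ij}. -/
noncomputable def ginv : Matrix (Fin n) (Fin n) ℝ :=
  (Matrix.of fun i j => g (b i) (b j))⁻¹

/-- Ric(R)(x,y) := Σ g^{ij} R(e_i,x,y,e_j). -/
noncomputable def Ric (F : V → V → V → V → ℝ) : V → V → ℝ :=
  fun x y => ∑ i, ∑ j, ginv n b g i j * F (b i) x y (b j)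

/-- Ric*(R)(x,y) := Σ g^{ij} R(x,e_i,e_j,y). -/
noncomputable def RicS (F : V → V → V → V → ℝ) : V → V → ℝ :=
  fun x y => ∑ i, ∑ j, ginv n b g i j * F x (b i) (b j) y

/-- The generalized scalar curvature τ(R). -/
noncomputable def tau (F : V → V → V → V → ℝ) : ℝ :=
  ∑ i, ∑ j, ∑ k, ∑ l, ginv n b g i l * ginv n b g j k * F (b i) (b j) (b k) (b l)

/-- The g-trace of a bilinear form. -/
noncomputable def trg (h : V → V → ℝ) : ℝ := ∑ i, ∑ j, ginv n b g i j * h (b i) (b j)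

/-- The scalar product on 4-tensors given by full contraction with g. -/
noncomputable def inner4 (F T : V → V → V → V → ℝ) : ℝ :=
  ∑ i, ∑ j, ∑ k, ∑ l, ∑ i', ∑ j', ∑ k', ∑ l',
    ginv n b g i i' * ginv n b g j j' * ginv n b g k k' * ginv n b g l l' *
      F (b i) (b j) (b k) (b l) * T (b i') (b j') (b k') (b l')

/-- W-projection π₁. -/
noncomputable def pi1 (F : V → V → V → V → ℝ) : V → V → V → V → ℝ :=
  (-(tau n b g F) / ((n : ℝ) * ((n : ℝ) - 1))) • wedge 0 g g

/-- W-projection π₂. -/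
noncomputable def pi2 (F : V → V → V → V → ℝ) : V → V → V → V → ℝ :=
  ((1 : ℝ) / ((n : ℝ) - 1)) • wedge 0 (((tau n b g F) / (n : ℝ)) • g - symB (Ric n b g F)) g

/-- W-projection π₃. -/
noncomputable def pi3 (F : V → V → V → V → ℝ) : V → V → V → V → ℝ :=
  ((-1 : ℝ) / ((n : ℝ) + 1)) •
    ((2 : ℝ) • prodB (lamB (Ric n b g F)) g + wedge 0 (lamB (Ric n b g F)) g)

/-- W-projection π₄. -/
noncomputable def pi4 (F : V → V → V → V → ℝ) : V → V → V → V → ℝ :=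
  ((-1 : ℝ) / ((n : ℝ) ^ 2 - 4)) •
      ((2 : ℝ) • prodB (lamB (RicS n b g F)) g + wedge ((n : ℝ) + 1) (lamB (RicS n b g F)) g)
    - ((3 : ℝ) / (((n : ℝ) ^ 2 - 4) * ((n : ℝ) + 1))) •
      ((2 : ℝ) • prodB (lamB (Ric n b g F)) g + wedge ((n : ℝ) + 1) (lamB (Ric n b g F)) g)

/-- W-projection π₅. -/
noncomputable def pi5 (F : V → V → V → V → ℝ) : V → V → V → V → ℝ :=
  ((1 : ℝ) / (((n : ℝ) - 1) * ((n : ℝ) - 2))) •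
    ((tau n b g F) • wedge 0 g g -
      ((1 : ℝ) / (n : ℝ)) •
        wedge ((n : ℝ) - 1) (symB (Ric n b g F + ((n : ℝ) - 1) • RicS n b g F)) g)

/-- W-projection π₆. -/
noncomputable def pi6 (F : V → V → V → V → ℝ) : V → V → V → V → ℝ :=
  psi F + ((1 : ℝ) / (2 * ((n : ℝ) - 2))) • wedge 1 (symB (Ric n b g F + RicS n b g F)) g
    - ((tau n b g F) / (((n : ℝ) - 1) * ((n : ℝ) - 2))) • wedge 0 g g

/-- W-projection π₇. -/
noncomputable def pi7 (F : V → V → V → V → ℝ) : V → V → V → V → ℝ :=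
  mu F + ((1 : ℝ) / (2 * (n : ℝ))) • wedge (-1) (symB (Ric n b g F - RicS n b g F)) g
    + ((1 : ℝ) / (2 * ((n : ℝ) + 2))) • prodB (lamB ((3 : ℝ) • Ric n b g F - RicS n b g F)) g
    + ((1 : ℝ) / (4 * ((n : ℝ) + 2))) • wedge (-1) (lamB ((3 : ℝ) • Ric n b g F - RicS n b g F)) g

/-- W-projection π₈. -/
noncomputable def pi8 (F : V → V → V → V → ℝ) : V → V → V → V → ℝ :=
  F - psi F - mu F
    + ((1 : ℝ) / (2 * ((n : ℝ) - 2))) • prodB (lamB (Ric n b g F + RicS n b g F)) g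
    + ((1 : ℝ) / (4 * ((n : ℝ) - 2))) • wedge 3 (lamB (Ric n b g F + RicS n b g F)) g

/-- A-projection α₁. -/
noncomputable def al1 (F : V → V → V → V → ℝ) : V → V → V → V → ℝ :=
  (-(tau n b g F) / ((n : ℝ) * ((n : ℝ) - 1))) • wedge 0 g g

/-- A-projection α₂. -/
noncomputable def al2 (F : V → V → V → V → ℝ) : V → V → V → V → ℝ :=
  ((-1 : ℝ) / (2 * ((n : ℝ) - 2))) • wedge 1 (symB (Ric n b g F + RicS n b g F)) g
    + ((2 * tau n b g F) / ((n : ℝ) * ((n : ℝ) - 2))) • wedge 0 g g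

/-- A-projection α₃. -/
noncomputable def al3 (F : V → V → V → V → ℝ) : V → V → V → V → ℝ :=
  ((-1 : ℝ) / (2 * (n : ℝ))) • wedge (-1) (symB (Ric n b g F - RicS n b g F)) g

/-- A-projection α₄. -/
noncomputable def al4 (F : V → V → V → V → ℝ) : V → V → V → V → ℝ :=
  ((-1 : ℝ) / (4 * ((n : ℝ) + 2))) •
    ((2 : ℝ) • prodB (lamB ((3 : ℝ) • Ric n b g F - RicS n b g F)) g
      + wedge (-1) (lamB ((3 : ℝ) • Ric n b g F - RicS n b g F)) g)

/-- A-projection α₅. -/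
noncomputable def al5 (F : V → V → V → V → ℝ) : V → V → V → V → ℝ :=
  ((-1 : ℝ) / (4 * ((n : ℝ) - 2))) •
    ((2 : ℝ) • prodB (lamB (Ric n b g F + RicS n b g F)) g
      + wedge 3 (lamB (Ric n b g F + RicS n b g F)) g)

/-- A-projection α₆. -/
noncomputable def al6 (F : V → V → V → V → ℝ) : V → V → V → V → ℝ :=
  psi F - al1 n b g F - al2 n b g F

/-- A-projection α₇. -/
noncomputable def al7 (F : V → V → V → V → ℝ) : V → V → V → V → ℝ :=
  mu F - al3 n b g F - al4 n b g F

/-- A-projection α₈. -/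
noncomputable def al8 (F : V → V → V → V → ℝ) : V → V → V → V → ℝ :=
  F - mu F - psi F - al5 n b g F

/-- Curvature tensors of constant curvature type. -/
noncomputable def uSet : Set (V → V → V → V → ℝ) :=
  {F | ∃ c : ℝ, ∀ x y z w, F x y z w = c * (g x w * g y z - g x z * g y w)}

/-- Ricci traceless algebraic curvature tensors built from a traceless symmetric form. -/
noncomputable def zSet : Set (V → V → V → V → ℝ) :=
  {F | ∃ Xi : V → V → ℝ, IsBilin Xi ∧ (∀ x y, Xi x y = Xi y x) ∧ trg n b g Xi = 0 ∧
    ∀ x y z w, F x y z w = Xi x w * g y z + g x w * Xi y z - Xi x z * g y w - g x z * Xi y w}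

/-- Weyl type (Ricci flat algebraic) curvature tensors. -/
noncomputable def wSet : Set (V → V → V → V → ℝ) :=
  {F | F ∈ aSet V ∧ Ric n b g F = fun _ _ => 0}

/-- The projective curvature tensor p(R). -/
noncomputable def pProj (F : V → V → V → V → ℝ) : V → V → V → V → ℝ :=
  F - pi1 n b g F - pi2 n b g F - pi3 n b g F

end GCT

/-! Contracting `ψ(F) = 0` and `μ(F) = 0` with `g^{ij}` in the first and last slots gives two
linear relations between `Ric(u,v)`, `Ric(v,u)`, `Ric*(u,v)`, `Ric*(v,u)`: the first says that
`Ric + Ric*` is antisymmetric, the second reads `5 Ric(u,v) - 3 Ric*(u,v) = Ric(v,u) + Ric*(v,u)`.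
Symmetrising the second and comparing with the first forces `Ric` to be antisymmetric, and then
`Ric* = 3 Ric`. -/

namespace GCT

theorem psi_apply_eq_zero {V : Type*} {F : V → V → V → V → ℝ} (hψ : psi F = 0) (x y z w : V) :
    F x y z w + F y x w z + F z w x y + F w z y x = 0 := by
  have h := congrFun (congrFun₃ hψ x y z) w
  simp only [psi, Pi.zero_apply] at h
  linarith

theorem mu_apply_eq_zero {V : Type*} {F : V → V → V → V → ℝ} (hμ : mu F = 0) (x y z w : V) :
    3 * F x y z w + 3 * F x y w z + F x w z y + F x z w y + F w y z x + F z y w x = 0 := by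
  have h := congrFun (congrFun₃ hμ x y z) w
  simp only [mu, Pi.zero_apply] at h
  linarith

variable {V : Type*} [AddCommGroup V] [Module ℝ V] (n : ℕ) (b : Module.Basis (Fin n) ℝ V)
  (g : V → V → ℝ)

theorem ginv_isSymm (hgs : ∀ x y, g x y = g y x) : (ginv n b g).IsSymm :=
  Matrix.IsSymm.inv (Matrix.IsSymm.ext fun i j => hgs (b j) (b i))

theorem trg_add (h k : V → V → ℝ) :
    trg n b g (fun p q => h p q + k p q) = trg n b g h + trg n b g k := by
  simp only [trg, mul_add, Finset.sum_add_distrib]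

theorem trg_sub (h k : V → V → ℝ) :
    trg n b g (fun p q => h p q - k p q) = trg n b g h - trg n b g k := by
  simp only [trg, mul_sub, Finset.sum_sub_distrib]

theorem trg_const_mul (c : ℝ) (h : V → V → ℝ) :
    trg n b g (fun p q => c * h p q) = c * trg n b g h := by
  simp only [trg, Finset.mul_sum, mul_left_comm c]

theorem trg_zero : trg n b g (fun _ _ => 0) = 0 := by
  simp only [trg, mul_zero, Finset.sum_const_zero]

theorem trg_eq_Ric (F : V → V → V → V → ℝ) (x y : V) :
    trg n b g (fun p q => F p x y q) = Ric n b g F x y := rfl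

theorem trg_eq_RicS (F : V → V → V → V → ℝ) (x y : V) :
    trg n b g (fun p q => F x p q y) = RicS n b g F x y := rfl

variable {g}

theorem trg_flip (hgs : ∀ x y, g x y = g y x) (h : V → V → ℝ) :
    trg n b g (fun p q => h q p) = trg n b g h := by
  rw [trg, trg, Finset.sum_comm]
  refine Finset.sum_congr rfl fun i _ => Finset.sum_congr rfl fun j _ => ?_
  rw [(ginv_isSymm n b g hgs).apply i j]

theorem trg_eq_zero_of_antisymm (hgs : ∀ x y, g x y = g y x) {h : V → V → ℝ}
    (hh : ∀ p q, h q p = -h p q) : trg n b g h = 0 := by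
  have h' : trg n b g h = -trg n b g h := calc
    trg n b g h = trg n b g (fun p q => h q p) := (trg_flip n b hgs h).symm
    _ = trg n b g (fun p q => -1 * h p q) :=
      congrArg _ (funext₂ fun p q => by rw [hh, neg_one_mul])
    _ = -trg n b g h := by rw [trg_const_mul, neg_one_mul]
  linarith

variable {n b}

theorem Ric_add_RicS_antisymm_of_psi_eq_zero (hgs : ∀ x y, g x y = g y x)
    {F : V → V → V → V → ℝ} (hψ : psi F = 0) (u v : V) :
    Ric n b g F u v + RicS n b g F u v = -(Ric n b g F v u + RicS n b g F v u) := by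
  have h := congrArg (trg n b g) (funext₂ fun p q => psi_apply_eq_zero hψ p u v q)
  simp only [trg_add, trg_zero] at h
  rw [trg_flip n b hgs (fun p q => F v p q u), trg_flip n b hgs (fun p q => F p v u q)] at h
  simp only [trg_eq_Ric, trg_eq_RicS] at h
  linarith

theorem five_Ric_sub_three_RicS_of_mu_eq_zero (hgs : ∀ x y, g x y = g y x)
    {F : V → V → V → V → ℝ} (hF : F ∈ rSet V) (hμ : mu F = 0) (u v : V) :
    5 * Ric n b g F u v - 3 * RicS n b g F u v = Ric n b g F v u + RicS n b g F v u := by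
  obtain ⟨-, hanti, hbianchi⟩ := hF
  -- `μ(F)(p,u,v,q)`, with antisymmetry and Bianchi bringing each term to a shape whose
  -- contraction is a value of `Ric` or `Ric*`, or vanishes
  have hpt : ∀ p q, 3 * F p u v q - 3 * F u p q v + F p q v u - F v p q u
      + 2 * F q u v p - F q v u p = 0 := fun p q => by
    linarith [mu_apply_eq_zero hμ p u v q, hanti p u q v, hanti p v q u, hanti u q v p,
      hbianchi v u q p]
  have h := congrArg (trg n b g) (funext₂ hpt)
  simp only [trg_add, trg_sub, trg_const_mul, trg_zero] at h
  rw [trg_eq_zero_of_antisymm n b hgs fun p q => hanti q p v u,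
    trg_flip n b hgs (fun p q => F p u v q), trg_flip n b hgs (fun p q => F p v u q)] at h
  simp only [trg_eq_Ric, trg_eq_RicS] at h
  linarith

theorem stmt11_general {V : Type*} [AddCommGroup V] [Module ℝ V]
    (n : ℕ) (b : Module.Basis (Fin n) ℝ V)
    (g : V → V → ℝ) (hgs : ∀ x y, g x y = g y x) :
    ∀ F ∈ rSet V, psi F = 0 → mu F = 0 →
      (∀ y z, Ric n b g F y z = - Ric n b g F z y) ∧
      RicS n b g F = (3 : ℝ) • Ric n b g F := by
  intro F hF hψ hμ
  have hψRic := Ric_add_RicS_antisymm_of_psi_eq_zero hgs (b := b) hψ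
  have hμRic := five_Ric_sub_three_RicS_of_mu_eq_zero hgs (b := b) hF hμ
  have hRic : ∀ y z, Ric n b g F y z = -Ric n b g F z y := fun y z => by
    linarith [hψRic y z, hμRic y z, hμRic z y]
  refine ⟨hRic, funext₂ fun y z => ?_⟩
  simp only [Pi.smul_apply, smul_eq_mul]
  linarith [hψRic y z, hμRic y z, hRic y z]

theorem stmt11 {V : Type*} [AddCommGroup V] [Module ℝ V]
    (n : ℕ) (hn : 3 ≤ n) (b : Module.Basis (Fin n) ℝ V)
    (g : V → V → ℝ) (hgb : IsBilin g) (hgs : ∀ x y, g x y = g y x)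
    (hgnd : ∀ x : V, (∀ y : V, g x y = 0) → x = 0) :
    ∀ F ∈ rSet V, psi F = 0 → mu F = 0 →
      (∀ y z, Ric n b g F y z = - Ric n b g F z y) ∧
      RicS n b g F = (3 : ℝ) • Ric n b g F :=
  stmt11_general n b g hgs

end GCT
end

section
/- Let R ∈ 𝔯(V) be such that R* ∈ 𝔯(V) as well. Then: (1) α_j(R*) = α_j(R) = (α_j(R))* for j = 1, 2, 6; (2) α₃(R*) = (α₃(R))* = −α₃(R); (3) α_j(R*) = −α_j(R) for j = 4, 7; (4) α_j(R*) = 0 = α_j(R) for j = 5, 8. -/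
open scoped BigOperators
open Pointwise

namespace GCT

variable {V : Type*} [AddCommGroup V] [Module ℝ V]

variable (n : ℕ) (b : Module.Basis (Fin n) ℝ V) (g : V → V → ℝ)

/-!
For `F ∈ 𝔯 ∩ 𝔯*`, the tensor `F + F*` is an algebraic curvature tensor and `F - F*` lies in `𝔰`.
Since `ψ` is the identity on `𝔞` and vanishes on `𝔰`, while `μ` does the opposite, this gives
`μ(F*) = -μ(F)` and `μ + ψ = id` on `𝔯 ∩ 𝔯*`. Conjugation interchanges `Ric` and `Ric*` and fixes
`τ`, and the Bianchi identities of `F` and `F*` together make `Ric + Ric*` symmetric. The sign of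
each `α_j` under conjugation is then read off from `g ∧ g` and `∧₁` being conjugation invariant and
`∧₋₁` anti-invariant, while `α₅` and `α₈` vanish because `Λ(Ric + Ric*) = 0` and `μ + ψ = id`.
-/

section PointwiseIdentities

variable {E : Type*} (F G : E → E → E → E → ℝ)

@[simp]
lemma conj_conj : conj (conj F) = F := by
  funext x y z w
  simp only [conj, neg_neg]

lemma psi_add : psi (F + G) = psi F + psi G := by
  funext x y z w
  simp only [psi, Pi.add_apply]
  ring

lemma psi_sub : psi (F - G) = psi F - psi G := by
  funext x y z w
  simp only [psi, Pi.sub_apply]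
  ring

lemma mu_add : mu (F + G) = mu F + mu G := by
  funext x y z w
  simp only [mu, Pi.add_apply]
  ring

lemma mu_sub : mu (F - G) = mu F - mu G := by
  funext x y z w
  simp only [mu, Pi.sub_apply]
  ring

lemma conj_psi : conj (psi F) = psi (conj F) := by
  funext x y z w
  simp only [psi, conj]
  ring

lemma conj_add : conj (F + G) = conj F + conj G := by
  funext x y z w
  simp only [conj, Pi.add_apply]
  ring

lemma conj_sub : conj (F - G) = conj F - conj G := by
  funext x y z w
  simp only [conj, Pi.sub_apply]
  ring

lemma conj_smul (c : ℝ) : conj (c • F) = c • conj F := by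
  funext x y z w
  simp only [conj, Pi.smul_apply, smul_eq_mul]
  ring

lemma conj_wedge_zero_self (h : E → E → ℝ) : conj (wedge 0 h h) = wedge 0 h h := by
  funext x y z w
  simp only [conj, wedge]
  ring

lemma conj_wedge_one (h k : E → E → ℝ) : conj (wedge 1 h k) = wedge 1 h k := by
  funext x y z w
  simp only [conj, wedge]
  ring

lemma conj_wedge_neg_one (h k : E → E → ℝ) : conj (wedge (-1) h k) = -wedge (-1) h k := by
  funext x y z w
  simp only [conj, wedge, Pi.neg_apply]
  ring

lemma wedge_neg_left (t : ℝ) (h k : E → E → ℝ) : wedge t (-h) k = -wedge t h k := by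
  funext x y z w
  simp only [wedge, Pi.neg_apply]
  ring

lemma wedge_zero_left (t : ℝ) (k : E → E → ℝ) : wedge t 0 k = 0 := by
  funext x y z w
  simp only [wedge, Pi.zero_apply]
  ring

lemma prodB_neg_left (h k : E → E → ℝ) : prodB (-h) k = -prodB h k := by
  funext x y z w
  simp only [prodB, Pi.neg_apply, neg_mul]

lemma prodB_zero_left (k : E → E → ℝ) : prodB 0 k = 0 := by
  funext x y z w
  simp only [prodB, Pi.zero_apply, zero_mul]

lemma symB_neg (h : E → E → ℝ) : symB (-h) = -symB h := by
  funext x y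
  simp only [symB, Pi.neg_apply]
  ring

variable {F}

lemma psi_conj (hA : ∀ x y z w, F x y z w = -F y x z w) : psi (conj F) = psi F := by
  funext x y z w
  simp only [psi, conj]
  linarith [hA x y z w, hA x y w z, hA z w x y, hA z w y x]

end PointwiseIdentities

section AlgebraicAndSymmetricParts

variable {F G : V → V → V → V → ℝ}

lemma IsLin.add {f f' : V → ℝ} (hf : IsLin f) (hf' : IsLin f') : IsLin (f + f') :=
  ⟨fun x y => by simp only [Pi.add_apply, hf.1, hf'.1]; ring,
    fun c x => by simp only [Pi.add_apply, hf.2, hf'.2]; ring⟩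

lemma IsLin.sub {f f' : V → ℝ} (hf : IsLin f) (hf' : IsLin f') : IsLin (f - f') :=
  ⟨fun x y => by simp only [Pi.sub_apply, hf.1, hf'.1]; ring,
    fun c x => by simp only [Pi.sub_apply, hf.2, hf'.2]; ring⟩

lemma IsMulti4.add (hF : IsMulti4 F) (hG : IsMulti4 G) : IsMulti4 (F + G) :=
  ⟨fun y z w => (hF.1 y z w).add (hG.1 y z w), fun x z w => (hF.2.1 x z w).add (hG.2.1 x z w),
    fun x y w => (hF.2.2.1 x y w).add (hG.2.2.1 x y w),
    fun x y z => (hF.2.2.2 x y z).add (hG.2.2.2 x y z)⟩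

lemma IsMulti4.sub (hF : IsMulti4 F) (hG : IsMulti4 G) : IsMulti4 (F - G) :=
  ⟨fun y z w => (hF.1 y z w).sub (hG.1 y z w), fun x z w => (hF.2.1 x z w).sub (hG.2.1 x z w),
    fun x y w => (hF.2.2.1 x y w).sub (hG.2.2.1 x y w),
    fun x y z => (hF.2.2.2 x y z).sub (hG.2.2.2 x y z)⟩

lemma add_mem_rSet (hF : F ∈ rSet V) (hG : G ∈ rSet V) : F + G ∈ rSet V :=
  ⟨hF.1.add hG.1, fun x y z w => by simp only [Pi.add_apply, hF.2.1 x, hG.2.1 x]; ring,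
    fun x y z w => by simp only [Pi.add_apply]; linear_combination hF.2.2 x y z w + hG.2.2 x y z w⟩

lemma sub_mem_rSet (hF : F ∈ rSet V) (hG : G ∈ rSet V) : F - G ∈ rSet V :=
  ⟨hF.1.sub hG.1, fun x y z w => by simp only [Pi.sub_apply, hF.2.1 x, hG.2.1 x]; ring,
    fun x y z w => by simp only [Pi.sub_apply]; linear_combination hF.2.2 x y z w - hG.2.2 x y z w⟩

lemma add_conj_mem_aSet (hF : F ∈ rSet V) (hFc : conj F ∈ rSet V) : F + conj F ∈ aSet V :=
  ⟨add_mem_rSet hF hFc, fun x y z w => by simp only [Pi.add_apply, conj]; ring⟩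

lemma sub_conj_mem_sSet (hF : F ∈ rSet V) (hFc : conj F ∈ rSet V) : F - conj F ∈ sSet V :=
  ⟨sub_mem_rSet hF hFc, fun x y z w => by simp only [Pi.sub_apply, conj]; ring⟩

lemma pair_symm_of_mem_aSet (hF : F ∈ aSet V) (x y z w : V) : F x y z w = F z w x y := by
  obtain ⟨⟨-, h12, hB⟩, h34⟩ := hF
  linarith [hB x y z w, hB y z w x, hB z w x y, hB w x y z, h34 x y z w, h34 y z w x,
    h34 z w x y, h34 w x y z, h34 y w x z, h12 z x w y, h34 z x w y, h12 w y z x]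

lemma psi_eq_self_of_mem_aSet (hF : F ∈ aSet V) : psi F = F := by
  funext x y z w
  have hpair := pair_symm_of_mem_aSet hF
  obtain ⟨⟨-, h12, -⟩, h34⟩ := hF
  simp only [psi]
  linarith [h12 y x w z, h34 x y w z, h12 w z y x, h34 z w y x, hpair x y z w]

lemma mu_eq_zero_of_mem_aSet (hF : F ∈ aSet V) : mu F = 0 := by
  funext x y z w
  obtain ⟨⟨-, h12, hB⟩, h34⟩ := hF
  simp only [mu, Pi.zero_apply]
  linarith [h34 x y z w, h34 x w z y, h34 w y z x, h34 x z w y, h34 z y w x, hB x w y z,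
    hB x z y w, h12 y x w z, h12 y x z w]

lemma psi_eq_zero_of_mem_sSet (hF : F ∈ sSet V) : psi F = 0 := by
  funext x y z w
  obtain ⟨⟨-, h12, -⟩, h34⟩ := hF
  simp only [psi, Pi.zero_apply]
  linarith [h12 y x w z, h34 x y w z, h12 w z y x, h34 z w y x]

lemma mu_eq_self_of_mem_sSet (hF : F ∈ sSet V) : mu F = F := by
  funext x y z w
  obtain ⟨⟨-, h12, hB⟩, h34⟩ := hF
  simp only [mu]
  linarith [h34 x y z w, h34 x w z y, h34 w y z x, h34 x z w y, h34 z y w x, hB x w y z,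
    hB x z y w, h12 y x w z, h12 y x z w]

lemma mu_conj (hF : F ∈ rSet V) (hFc : conj F ∈ rSet V) : mu (conj F) = -mu F := by
  refine eq_neg_of_add_eq_zero_right ?_
  rw [← mu_add, mu_eq_zero_of_mem_aSet (add_conj_mem_aSet hF hFc)]

lemma mu_add_psi (hF : F ∈ rSet V) (hFc : conj F ∈ rSet V) : mu F + psi F = F := by
  have hA := add_conj_mem_aSet hF hFc
  have hS := sub_conj_mem_sSet hF hFc
  have h : (2 : ℝ) • (mu F + psi F) = (2 : ℝ) • F :=
    calc (2 : ℝ) • (mu F + psi F)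
        = mu (F - conj F) + mu (F + conj F) + (psi (F + conj F) + psi (F - conj F)) := by
          rw [mu_add, mu_sub, psi_add, psi_sub, two_smul]; abel
      _ = (F - conj F) + (F + conj F) := by
          rw [mu_eq_self_of_mem_sSet hS, mu_eq_zero_of_mem_aSet hA, psi_eq_self_of_mem_aSet hA,
            psi_eq_zero_of_mem_sSet hS, add_zero, add_zero]
      _ = (2 : ℝ) • F := by rw [two_smul]; abel
  exact smul_right_injective _ two_ne_zero h

end AlgebraicAndSymmetricParts

section Contractions

variable {F : V → V → V → V → ℝ}

lemma ginv_comm (hgs : ∀ x y, g x y = g y x) (i j : Fin n) : ginv n b g i j = ginv n b g j i :=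
  (Matrix.IsSymm.ext fun i j => hgs (b j) (b i)).inv.apply j i

lemma Ric_conj (hA : ∀ x y z w, F x y z w = -F y x z w) : Ric n b g (conj F) = RicS n b g F := by
  funext x y
  simp only [Ric, RicS, conj]
  refine Finset.sum_congr rfl fun i _ => Finset.sum_congr rfl fun j _ => ?_
  rw [hA (b i) x (b j) y, neg_neg]

lemma RicS_conj (hA : ∀ x y z w, F x y z w = -F y x z w) : RicS n b g (conj F) = Ric n b g F := by
  funext x y
  simp only [Ric, RicS, conj]
  refine Finset.sum_congr rfl fun i _ => Finset.sum_congr rfl fun j _ => ?_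
  rw [hA x (b i) y (b j), neg_neg]

lemma tau_conj (hA : ∀ x y z w, F x y z w = -F y x z w) : tau n b g (conj F) = tau n b g F := by
  -- swap the summation indices i ↔ j and k ↔ l
  simp only [tau, conj]
  rw [Finset.sum_comm]
  refine Finset.sum_congr rfl fun i _ => Finset.sum_congr rfl fun j _ => ?_
  rw [Finset.sum_comm]
  refine Finset.sum_congr rfl fun k _ => Finset.sum_congr rfl fun l _ => ?_
  rw [hA (b j) (b i) (b k) (b l)]
  ring

lemma Ric_sub_Ric_swap (hF : F ∈ rSet V) (x y : V) :
    Ric n b g F x y - Ric n b g F y x = -∑ i, ∑ j, ginv n b g i j * F x y (b i) (b j) := by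
  simp only [Ric, ← Finset.sum_sub_distrib, ← Finset.sum_neg_distrib]
  refine Finset.sum_congr rfl fun i _ => Finset.sum_congr rfl fun j _ => ?_
  linear_combination ginv n b g i j * (hF.2.2 (b i) x y (b j) - hF.2.1 y (b i) x (b j))

lemma lamB_Ric_add_RicS (hgs : ∀ x y, g x y = g y x) (hF : F ∈ rSet V) (hFc : conj F ∈ rSet V) :
    lamB (Ric n b g F + RicS n b g F) = 0 := by
  funext x y
  have hRic := Ric_sub_Ric_swap n b g hF x y
  have hRicS := Ric_sub_Ric_swap n b g hFc x y
  rw [Ric_conj n b g hF.2.1] at hRicS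
  have hswap : ∑ i, ∑ j, ginv n b g i j * conj F x y (b i) (b j)
      = -∑ i, ∑ j, ginv n b g i j * F x y (b i) (b j) := by
    simp only [conj, ← Finset.sum_neg_distrib]
    rw [Finset.sum_comm]
    refine Finset.sum_congr rfl fun i _ => Finset.sum_congr rfl fun j _ => ?_
    rw [ginv_comm n b g hgs]
    ring
  simp only [lamB, Pi.add_apply, Pi.zero_apply]
  linarith

end Contractions

section Projections

variable {F : V → V → V → V → ℝ}

lemma al1_conj (hA : ∀ x y z w, F x y z w = -F y x z w) : al1 n b g (conj F) = al1 n b g F := by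
  rw [al1, al1, tau_conj n b g hA]

lemma conj_al1 (F : V → V → V → V → ℝ) : conj (al1 n b g F) = al1 n b g F := by
  rw [al1, conj_smul, conj_wedge_zero_self]

lemma al2_conj (hA : ∀ x y z w, F x y z w = -F y x z w) : al2 n b g (conj F) = al2 n b g F := by
  rw [al2, al2, tau_conj n b g hA, Ric_conj n b g hA, RicS_conj n b g hA, add_comm (RicS n b g F)]

lemma conj_al2 (F : V → V → V → V → ℝ) : conj (al2 n b g F) = al2 n b g F := by
  rw [al2, conj_add, conj_smul, conj_smul, conj_wedge_one, conj_wedge_zero_self]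

lemma al6_conj (hA : ∀ x y z w, F x y z w = -F y x z w) : al6 n b g (conj F) = al6 n b g F := by
  rw [al6, al6, psi_conj hA, al1_conj n b g hA, al2_conj n b g hA]

lemma conj_al6 (hA : ∀ x y z w, F x y z w = -F y x z w) : conj (al6 n b g F) = al6 n b g F := by
  rw [al6, conj_sub, conj_sub, conj_psi, psi_conj hA, conj_al1, conj_al2]

lemma al3_conj (hA : ∀ x y z w, F x y z w = -F y x z w) : al3 n b g (conj F) = -al3 n b g F := by
  rw [al3, al3, Ric_conj n b g hA, RicS_conj n b g hA, ← neg_sub, symB_neg, wedge_neg_left,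
    smul_neg]

lemma conj_al3 (F : V → V → V → V → ℝ) : conj (al3 n b g F) = -al3 n b g F := by
  rw [al3, conj_smul, conj_wedge_neg_one, smul_neg]

lemma al4_conj (hgs : ∀ x y, g x y = g y x) (hF : F ∈ rSet V) (hFc : conj F ∈ rSet V) :
    al4 n b g (conj F) = -al4 n b g F := by
  have hlam : lamB ((3 : ℝ) • RicS n b g F - Ric n b g F)
      = -lamB ((3 : ℝ) • Ric n b g F - RicS n b g F) := by
    funext x y
    have h := congr_fun (congr_fun (lamB_Ric_add_RicS n b g hgs hF hFc) x) y
    simp only [lamB, Pi.add_apply, Pi.sub_apply, Pi.smul_apply, Pi.neg_apply, Pi.zero_apply,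
      smul_eq_mul] at h ⊢
    linarith
  rw [al4, al4, Ric_conj n b g hF.2.1, RicS_conj n b g hF.2.1, hlam, prodB_neg_left,
    wedge_neg_left, smul_neg, ← neg_add, smul_neg]

lemma al7_conj (hgs : ∀ x y, g x y = g y x) (hF : F ∈ rSet V) (hFc : conj F ∈ rSet V) :
    al7 n b g (conj F) = -al7 n b g F := by
  rw [al7, al7, mu_conj hF hFc, al3_conj n b g hF.2.1, al4_conj n b g hgs hF hFc]
  abel

lemma al5_eq_zero (hgs : ∀ x y, g x y = g y x) (hF : F ∈ rSet V) (hFc : conj F ∈ rSet V) :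
    al5 n b g F = 0 := by
  rw [al5, lamB_Ric_add_RicS n b g hgs hF hFc, prodB_zero_left, wedge_zero_left, smul_zero,
    add_zero, smul_zero]

lemma al8_eq_zero (hgs : ∀ x y, g x y = g y x) (hF : F ∈ rSet V) (hFc : conj F ∈ rSet V) :
    al8 n b g F = 0 := by
  rw [al8, al5_eq_zero n b g hgs hF hFc, sub_zero, sub_sub, mu_add_psi hF hFc, sub_self]

end Projections

theorem stmt15_general {V : Type*} [AddCommGroup V] [Module ℝ V]
    (n : ℕ) (b : Module.Basis (Fin n) ℝ V)
    (g : V → V → ℝ) (hgs : ∀ x y, g x y = g y x) :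
    ∀ F ∈ rSet V, conj F ∈ rSet V →
      (al1 n b g (conj F) = al1 n b g F ∧ al1 n b g F = conj (al1 n b g F)) ∧
      (al2 n b g (conj F) = al2 n b g F ∧ al2 n b g F = conj (al2 n b g F)) ∧
      (al6 n b g (conj F) = al6 n b g F ∧ al6 n b g F = conj (al6 n b g F)) ∧
      (al3 n b g (conj F) = conj (al3 n b g F) ∧ conj (al3 n b g F) = - al3 n b g F) ∧
      al4 n b g (conj F) = - al4 n b g F ∧
      al7 n b g (conj F) = - al7 n b g F ∧
      (al5 n b g (conj F) = 0 ∧ al5 n b g F = 0) ∧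
      (al8 n b g (conj F) = 0 ∧ al8 n b g F = 0) := by
  intro F hF hFc
  have hA := hF.2.1
  have hFcc : conj (conj F) ∈ rSet V := by rwa [conj_conj]
  exact ⟨⟨al1_conj n b g hA, (conj_al1 n b g F).symm⟩, ⟨al2_conj n b g hA, (conj_al2 n b g F).symm⟩,
    ⟨al6_conj n b g hA, (conj_al6 n b g hA).symm⟩,
    ⟨(al3_conj n b g hA).trans (conj_al3 n b g F).symm, conj_al3 n b g F⟩,
    al4_conj n b g hgs hF hFc, al7_conj n b g hgs hF hFc,
    ⟨al5_eq_zero n b g hgs hFc hFcc, al5_eq_zero n b g hgs hF hFc⟩,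
    ⟨al8_eq_zero n b g hgs hFc hFcc, al8_eq_zero n b g hgs hF hFc⟩⟩

theorem stmt15 {V : Type*} [AddCommGroup V] [Module ℝ V]
    (n : ℕ) (hn : 3 ≤ n) (b : Module.Basis (Fin n) ℝ V)
    (g : V → V → ℝ) (hgb : IsBilin g) (hgs : ∀ x y, g x y = g y x)
    (hgnd : ∀ x : V, (∀ y : V, g x y = 0) → x = 0) :
    ∀ F ∈ rSet V, conj F ∈ rSet V →
      (al1 n b g (conj F) = al1 n b g F ∧ al1 n b g F = conj (al1 n b g F)) ∧
      (al2 n b g (conj F) = al2 n b g F ∧ al2 n b g F = conj (al2 n b g F)) ∧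
      (al6 n b g (conj F) = al6 n b g F ∧ al6 n b g F = conj (al6 n b g F)) ∧
      (al3 n b g (conj F) = conj (al3 n b g F) ∧ conj (al3 n b g F) = - al3 n b g F) ∧
      al4 n b g (conj F) = - al4 n b g F ∧
      al7 n b g (conj F) = - al7 n b g F ∧
      (al5 n b g (conj F) = 0 ∧ al5 n b g F = 0) ∧
      (al8 n b g (conj F) = 0 ∧ al8 n b g F = 0) :=
  stmt15_general n b g hgs

end GCT
end
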